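/- arXiv:2111.12692 — 4 statements merged into one kernel-verified Lean document; each statement's English description precedes it below -/
import Mathlib

section
/- Let 1<p<∞, let v,w be weights on ℝⁿ with [v,w]_{A_p}<∞, and suppose σ := w^{1-p'} satisfies [σ]_{A_∞}<∞. Let c_n be the dimensional constant in the sharp reverse Hölder inequality, and let 1<r<∞ be defined by r' = c_n p' [σ]_{A_∞}. Then [v,w]_{A_{p/r}} ≤ 2^{p-1} [v,w]_{A_p}. -/
/-!
With `s = r(p-1)/(p-r)` one has `s' = r'/p' = c[σ]_{A_∞}` and `σ^s = w^{1-(p/r)'}`, so the sharp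
reverse Hölder inequality for `σ` with exponent `s` gives, on every cube,
`(⨍_Q w^{1-(p/r)'})^{p/r-1} = ((⨍_Q σ^s)^{1/s})^{p-1} ≤ 2^{p-1} (⨍_Q σ)^{p-1}`.
-/

open MeasureTheory ENNReal NNReal Set

noncomputable section

/-- The conjugate exponent `p' = p/(p-1)`. -/
def conjExp (p : ℝ) : ℝ := p / (p - 1)
/-- An (open) axis-parallel cube in `ℝⁿ`. -/
def IsCube (n : ℕ) (Q : Set (Fin n → ℝ)) : Prop :=
  ∃ (a : Fin n → ℝ) (r : ℝ), 0 < r ∧ Q = Set.univ.pi fun i => Set.Ioo (a i) (a i + r)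

/-- An (open) axis-parallel rectangle in `ℝⁿ`. -/
def IsRect (n : ℕ) (R : Set (Fin n → ℝ)) : Prop :=
  ∃ a b : Fin n → ℝ, (∀ i, a i < b i) ∧ R = Set.univ.pi fun i => Set.Ioo (a i) (b i)

/-- The average `⨍_Q f` of a nonnegative function over a set. -/
def setAvg {n : ℕ} (Q : Set (Fin n → ℝ)) (f : (Fin n → ℝ) → ℝ≥0∞) : ℝ≥0∞ :=
  (∫⁻ x in Q, f x) / volume Q

/-- The Hardy–Littlewood maximal operator (over axis-parallel cubes). -/
def maximal {n : ℕ} (f : (Fin n → ℝ) → ℝ≥0∞) (x : Fin n → ℝ) : ℝ≥0∞ :=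
  ⨆ (Q : Set (Fin n → ℝ)) (_ : IsCube n Q) (_ : x ∈ Q), setAvg Q f

/-- The strong maximal operator (over axis-parallel rectangles). -/
def maximalR {n : ℕ} (f : (Fin n → ℝ) → ℝ≥0∞) (x : Fin n → ℝ) : ℝ≥0∞ :=
  ⨆ (R : Set (Fin n → ℝ)) (_ : IsRect n R) (_ : x ∈ R), setAvg R f

/-- The dual weight `σ = w^{1-p'}`. -/
def dualWeight {n : ℕ} (p : ℝ) (w : (Fin n → ℝ) → ℝ≥0∞) : (Fin n → ℝ) → ℝ≥0∞ :=
  fun x => w x ^ (1 - conjExp p)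

/-- The two-weight Muckenhoupt constant `[v,w]_{A_p}`. -/
def twoApConst (n : ℕ) (p : ℝ) (v w : (Fin n → ℝ) → ℝ≥0∞) : ℝ≥0∞ :=
  ⨆ (Q : Set (Fin n → ℝ)) (_ : IsCube n Q),
    setAvg Q v * setAvg Q (dualWeight p w) ^ (p - 1)

/-- The Muckenhoupt constant `[w]_{A_p}`. -/
def ApConst (n : ℕ) (p : ℝ) (w : (Fin n → ℝ) → ℝ≥0∞) : ℝ≥0∞ := twoApConst n p w w

/-- The Fujii–Wilson constant `[w]_{A_∞}`. -/
def AinfConst (n : ℕ) (w : (Fin n → ℝ) → ℝ≥0∞) : ℝ≥0∞ :=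
  ⨆ (Q : Set (Fin n → ℝ)) (_ : IsCube n Q),
    (∫⁻ x in Q, maximal (Q.indicator w) x) / ∫⁻ x in Q, w x

/-- The strong Muckenhoupt constant `[w]_{A_{p,ℛ}}`. -/
def ApRConst (n : ℕ) (p : ℝ) (w : (Fin n → ℝ) → ℝ≥0∞) : ℝ≥0∞ :=
  ⨆ (R : Set (Fin n → ℝ)) (_ : IsRect n R),
    setAvg R w * setAvg R (dualWeight p w) ^ (p - 1)

/-- The strong Fujii–Wilson constant `[w]_{A_{∞,ℛ}}`. -/
def AinfRConst (n : ℕ) (w : (Fin n → ℝ) → ℝ≥0∞) : ℝ≥0∞ :=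
  ⨆ (R : Set (Fin n → ℝ)) (_ : IsRect n R),
    (∫⁻ x in R, maximalR (R.indicator w) x) / ∫⁻ x in R, w x

def rhExp (p r : ℝ) : ℝ := r * (p - 1) / (p - r)

section Exponents

variable {p r : ℝ}

lemma one_lt_rhExp (hr : 1 < r) (hrp : r < p) : 1 < rhExp p r := by
  rw [rhExp, lt_div_iff₀ (by linarith)]
  nlinarith

lemma rhExp_sub_one (hrp : p ≠ r) : rhExp p r - 1 = p * (r - 1) / (p - r) := by
  have hpr : p - r ≠ 0 := sub_ne_zero.mpr hrp
  rw [rhExp]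
  field_simp
  ring

lemma rhExp_conj_mul_conjExp (hr : 1 < r) (hrp : r < p) :
    rhExp p r / (rhExp p r - 1) * conjExp p = r / (r - 1) := by
  have hpr : p - r ≠ 0 := by linarith
  have hr1 : r - 1 ≠ 0 := by linarith
  have hp1 : p - 1 ≠ 0 := by linarith
  have hp : p ≠ 0 := by linarith
  rw [rhExp_sub_one hrp.ne', rhExp, conjExp]
  field_simp

lemma rhExp_mul_div_sub_one (hr : r ≠ 0) (hrp : p ≠ r) :
    rhExp p r * (p / r - 1) = p - 1 := by
  have hpr : p - r ≠ 0 := sub_ne_zero.mpr hrp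
  rw [rhExp]
  field_simp

lemma one_sub_conjExp_div (hp : p ≠ 1) (hr : r ≠ 0) (hrp : p ≠ r) :
    1 - conjExp (p / r) = (1 - conjExp p) * rhExp p r := by
  have hp1 : p - 1 ≠ 0 := sub_ne_zero.mpr hp
  have hpr : p - r ≠ 0 := sub_ne_zero.mpr hrp
  have hpr' : p / r - 1 ≠ 0 := by
    rw [div_sub_one hr]
    exact div_ne_zero hpr hr
  rw [rhExp, conjExp, conjExp]
  field_simp
  ring

end Exponents

lemma dualWeight_div_eq_rpow {n : ℕ} {p r : ℝ} (hp : p ≠ 1) (hr : r ≠ 0) (hrp : p ≠ r)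
    (w : (Fin n → ℝ) → ℝ≥0∞) :
    dualWeight (p / r) w = fun x => dualWeight p w x ^ rhExp p r := by
  funext x
  rw [dualWeight, dualWeight, ← ENNReal.rpow_mul, one_sub_conjExp_div hp hr hrp]

lemma ofReal_rhExp_conj_eq {p r : ℝ} {K : ℝ≥0∞} (hr : 1 < r) (hrp : r < p)
    (h : ENNReal.ofReal (r / (r - 1)) = K * ENNReal.ofReal (conjExp p)) :
    ENNReal.ofReal (rhExp p r / (rhExp p r - 1)) = K := by
  have hconj_pos : 0 < conjExp p := div_pos (by linarith) (by linarith)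
  have hs_conj_nonneg : 0 ≤ rhExp p r / (rhExp p r - 1) :=
    div_nonneg (by linarith [one_lt_rhExp hr hrp]) (by linarith [one_lt_rhExp hr hrp])
  refine (ENNReal.mul_left_inj (ENNReal.ofReal_pos.mpr hconj_pos).ne' ENNReal.ofReal_ne_top).mp ?_
  rw [← ENNReal.ofReal_mul hs_conj_nonneg, rhExp_conj_mul_conjExp hr hrp, h]

lemma setAvg_mul_rpow_le_twoApConst {n : ℕ} {p : ℝ} {v w : (Fin n → ℝ) → ℝ≥0∞}
    {Q : Set (Fin n → ℝ)} (hQ : IsCube n Q) :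
    setAvg Q v * setAvg Q (dualWeight p w) ^ (p - 1) ≤ twoApConst n p v w :=
  le_iSup₂ (f := fun Q (_ : IsCube n Q) => setAvg Q v * setAvg Q (dualWeight p w) ^ (p - 1)) Q hQ

theorem twoweight_Ap_openness_general (n : ℕ) (c : ℝ)
    (hRHI : ∀ u : (Fin n → ℝ) → ℝ≥0∞, Measurable u → AinfConst n u ≠ ∞ →
      ∀ ru : ℝ, 1 < ru →
        ENNReal.ofReal (ru / (ru - 1)) = ENNReal.ofReal c * AinfConst n u →
          ∀ Q : Set (Fin n → ℝ), IsCube n Q →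
            (setAvg Q fun x => u x ^ ru) ^ (1 / ru) ≤ 2 * setAvg Q u)
    (p : ℝ) (hp : 1 < p)
    (v w : (Fin n → ℝ) → ℝ≥0∞) (hw : Measurable w)
    (hσ : AinfConst n (dualWeight p w) ≠ ∞)
    (r : ℝ) (hr1 : 1 < r) (hrp : r < p)
    (hrdef : ENNReal.ofReal (r / (r - 1)) =
      ENNReal.ofReal c * ENNReal.ofReal (conjExp p) * AinfConst n (dualWeight p w)) :
    twoApConst n (p / r) v w ≤ (2 : ℝ≥0∞) ^ (p - 1) * twoApConst n p v w := by
  set σ := dualWeight p w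
  set s := rhExp p r
  have hs : 1 < s := one_lt_rhExp hr1 hrp
  have hs_conj : ENNReal.ofReal (s / (s - 1)) = ENNReal.ofReal c * AinfConst n σ :=
    ofReal_rhExp_conj_eq hr1 hrp (by rw [hrdef, mul_right_comm])
  refine iSup₂_le fun Q hQ => ?_
  have hRH : (setAvg Q fun x => σ x ^ s) ≤ (2 * setAvg Q σ) ^ s :=
    (ENNReal.rpow_inv_le_iff (by linarith)).mp
      (by simpa only [one_div] using hRHI σ (hw.pow_const _) hσ s hs hs_conj Q hQ)
  have hpr_nonneg : 0 ≤ p / r - 1 := by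
    rw [sub_nonneg, le_div_iff₀ (by linarith)]
    linarith
  calc setAvg Q v * setAvg Q (dualWeight (p / r) w) ^ (p / r - 1)
      = setAvg Q v * (setAvg Q fun x => σ x ^ s) ^ (p / r - 1) := by
        rw [dualWeight_div_eq_rpow hp.ne' (by linarith) hrp.ne']
    _ ≤ setAvg Q v * ((2 * setAvg Q σ) ^ s) ^ (p / r - 1) := by gcongr
    _ = 2 ^ (p - 1) * (setAvg Q v * setAvg Q σ ^ (p - 1)) := by
        rw [← ENNReal.rpow_mul, rhExp_mul_div_sub_one (by linarith) hrp.ne',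
          ENNReal.mul_rpow_of_nonneg _ _ (by linarith)]
        ring
    _ ≤ 2 ^ (p - 1) * twoApConst n p v w := by
        gcongr
        exact setAvg_mul_rpow_le_twoApConst hQ

/-- Openness of the two-weight `A_p` condition: if `r' = c_n p' [σ]_{A_∞}` (with `c_n` the
constant of the sharp reverse Hölder inequality), then `[v,w]_{A_{p/r}} ≤ 2^{p-1}[v,w]_{A_p}`. -/
theorem twoweight_Ap_openness (n : ℕ) (c : ℝ) (hc : 1 ≤ c)
    (hRHI : ∀ u : (Fin n → ℝ) → ℝ≥0∞, Measurable u → AinfConst n u ≠ ∞ →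
      ∀ ru : ℝ, 1 < ru →
        ENNReal.ofReal (ru / (ru - 1)) = ENNReal.ofReal c * AinfConst n u →
          ∀ Q : Set (Fin n → ℝ), IsCube n Q →
            (setAvg Q fun x => u x ^ ru) ^ (1 / ru) ≤ 2 * setAvg Q u)
    (p : ℝ) (hp : 1 < p)
    (v w : (Fin n → ℝ) → ℝ≥0∞) (hv : Measurable v) (hw : Measurable w)
    (hvw : twoApConst n p v w ≠ ∞)
    (hσ : AinfConst n (dualWeight p w) ≠ ∞)
    (r : ℝ) (hr1 : 1 < r) (hrp : r < p)
    (hrdef : ENNReal.ofReal (r / (r - 1)) =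
      ENNReal.ofReal c * ENNReal.ofReal (conjExp p) * AinfConst n (dualWeight p w)) :
    twoApConst n (p / r) v w ≤ (2 : ℝ≥0∞) ^ (p - 1) * twoApConst n p v w :=
  twoweight_Ap_openness_general n c hRHI p hp v w hw hσ r hr1 hrp hrdef
end
end

section
/- Let θ ∈ (0,1], t ∈ (0,∞), let φ : (0,∞) → [0,∞) be increasing and ψ : (0,∞) → [0,∞) be decreasing. Then (∫_t^∞ φ(s)ψ(s) ds/s)^θ ≤ (log 2)^{-(1-θ)} ∫_{t/2}^∞ φ(4s)^θ ψ(s)^θ ds/s. -/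
/-!
Cut `(t, ∞)` into the dyadic blocks `(2ⁿt, 2ⁿ⁺¹t]`. On such a block `(a, 2a]` monotonicity bounds
`φψ` by `φ(2a)ψ(a)`, and `ds/s` gives the block mass `log 2`. The same value `φ(2a)ψ(a)` bounds
`φ(4s)ψ(s)` from below on the block `(a/2, a]` of `(t/2, ∞)`, which also has mass `log 2`.
Comparing block by block and using `(∑ xₙ)^θ ≤ ∑ xₙ^θ` for `θ ≤ 1` leaves the factor
`(log 2)^θ / log 2 = (log 2)^{-(1-θ)}`.
-/

open MeasureTheory ENNReal NNReal Set

noncomputable section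

theorem ENNReal.rpow_sum_le_sum_rpow {ι : Type*} (s : Finset ι) (a : ι → ℝ≥0∞) {θ : ℝ}
    (hθ0 : 0 < θ) (hθ1 : θ ≤ 1) : (∑ i ∈ s, a i) ^ θ ≤ ∑ i ∈ s, a i ^ θ := by
  classical
  induction s using Finset.induction_on with
  | empty => simp [ENNReal.zero_rpow_of_pos hθ0]
  | insert i s hi ih =>
    rw [Finset.sum_insert hi, Finset.sum_insert hi]
    exact (ENNReal.rpow_add_le_add_rpow _ _ hθ0.le hθ1).trans (add_le_add_right ih _)

theorem ENNReal.rpow_tsum_le_tsum_rpow {ι : Type*} (a : ι → ℝ≥0∞) {θ : ℝ}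
    (hθ0 : 0 < θ) (hθ1 : θ ≤ 1) : (∑' i, a i) ^ θ ≤ ∑' i, a i ^ θ := by
  rw [ENNReal.tsum_eq_iSup_sum, ENNReal.tsum_eq_iSup_sum]
  exact ((ENNReal.orderIsoRpow θ hθ0).map_iSup _).trans_le
    (iSup_mono fun s => ENNReal.rpow_sum_le_sum_rpow s a hθ0 hθ1)

theorem lintegral_Ioi_eq_tsum_lintegral_Ioc_two_pow_mul (f : ℝ → ℝ≥0∞) {c : ℝ} (hc : 0 < c) :
    ∫⁻ s in Ioi c, f s = ∑' n : ℕ, ∫⁻ s in Ioc (2 ^ n * c) (2 ^ (n + 1) * c), f s := by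
  have hmono : Monotone fun n : ℕ => (2 : ℝ) ^ n * c := fun m n hmn =>
    mul_le_mul_of_nonneg_right (pow_le_pow_right₀ one_le_two hmn) hc.le
  have hunbdd : ¬BddAbove (range fun n : ℕ => (2 : ℝ) ^ n * c) := by
    rintro ⟨M, hM⟩
    obtain ⟨n, hn⟩ := pow_unbounded_of_one_lt (M / c) one_lt_two
    exact ((div_lt_iff₀ hc).mp hn).not_ge (hM (mem_range_self n))
  have hunion := iUnion_Ioc_map_succ_eq_Ioi (fun n => hmono n.zero_le) hunbdd
  rw [_root_.bot_eq_zero, pow_zero, one_mul] at hunion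
  rw [← hunion, lintegral_iUnion (fun _ => measurableSet_Ioc) hmono.pairwise_disjoint_on_Ioc_succ]
  rfl

theorem lintegral_Ioc_inv_ofReal {a b : ℝ} (ha : 0 < a) (hab : a ≤ b) :
    ∫⁻ s in Ioc a b, (ENNReal.ofReal s)⁻¹ = ENNReal.ofReal (Real.log (b / a)) := by
  have hpos : ∀ s ∈ Ioc a b, 0 < s := fun s hs => ha.trans hs.1
  rw [← integral_inv_of_pos ha (ha.trans_le hab), intervalIntegral.integral_of_le hab,
    ofReal_integral_eq_lintegral_ofReal]
  · exact setLIntegral_congr_fun measurableSet_Ioc fun s hs =>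
      (ENNReal.ofReal_inv_of_pos (hpos s hs)).symm
  · exact (continuousOn_inv₀.mono fun s hs => (ha.trans_le hs.1).ne').integrableOn_Icc.mono_set
      Ioc_subset_Icc_self
  · exact (ae_restrict_mem measurableSet_Ioc).mono fun s hs => inv_nonneg.mpr (hpos s hs).le

section
variable {f g : ℝ → ℝ≥0∞} {a b : ℝ}

theorem setLIntegral_Ioc_mul_div_le (hf : MonotoneOn f (Icc a b)) (hg : AntitoneOn g (Icc a b)) :
    ∫⁻ s in Ioc a b, f s * g s / ENNReal.ofReal s ≤
      f b * g a * ∫⁻ s in Ioc a b, (ENNReal.ofReal s)⁻¹ := by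
  rw [← lintegral_const_mul _ (by fun_prop)]
  refine setLIntegral_mono' measurableSet_Ioc fun s hs => ?_
  have hb : b ∈ Icc a b := ⟨hs.1.le.trans hs.2, le_rfl⟩
  have ha : a ∈ Icc a b := ⟨le_rfl, hs.1.le.trans hs.2⟩
  rw [div_eq_mul_inv]
  gcongr
  · exact hf (Ioc_subset_Icc_self hs) hb hs.2
  · exact hg ha (Ioc_subset_Icc_self hs) hs.1.le

theorem le_setLIntegral_Ioc_mul_div (hf : MonotoneOn f (Icc a b)) (hg : AntitoneOn g (Icc a b)) :
    f a * g b * ∫⁻ s in Ioc a b, (ENNReal.ofReal s)⁻¹ ≤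
      ∫⁻ s in Ioc a b, f s * g s / ENNReal.ofReal s := by
  refine (lintegral_const_mul_le _ _).trans (setLIntegral_mono' measurableSet_Ioc fun s hs => ?_)
  have hb : b ∈ Icc a b := ⟨hs.1.le.trans hs.2, le_rfl⟩
  have ha : a ∈ Icc a b := ⟨le_rfl, hs.1.le.trans hs.2⟩
  rw [div_eq_mul_inv]
  gcongr
  · exact hf ha (Ioc_subset_Icc_self hs) hs.1.le
  · exact hg (Ioc_subset_Icc_self hs) hb hs.2

end

theorem ENNReal.ofReal_rpow_eq_ofReal_rpow_neg_one_sub_mul {x : ℝ} (hx : 0 < x) (θ : ℝ) :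
    ENNReal.ofReal x ^ θ = ENNReal.ofReal (x ^ (-(1 - θ))) * ENNReal.ofReal x := by
  rw [← ENNReal.ofReal_mul (Real.rpow_nonneg hx.le _), ← Real.rpow_add_one hx.ne',
    ENNReal.ofReal_rpow_of_pos hx]
  ring_nf

theorem rpow_setLIntegral_Ioc_two_mul_le {θ : ℝ} {φ ψ : ℝ → ℝ} (hθ0 : 0 < θ)
    (hφ : MonotoneOn φ (Ioi 0)) (hψ : AntitoneOn ψ (Ioi 0)) {a : ℝ} (ha : 0 < a) :
    (∫⁻ s in Ioc a (2 * a), ENNReal.ofReal (φ s) * ENNReal.ofReal (ψ s) / ENNReal.ofReal s) ^ θ ≤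
      ENNReal.ofReal (Real.log 2 ^ (-(1 - θ))) *
        ∫⁻ s in Ioc (a / 2) a,
          ENNReal.ofReal (φ (4 * s)) ^ θ * ENNReal.ofReal (ψ s) ^ θ / ENNReal.ofReal s := by
  have hIcc : ∀ {x : ℝ} (y : ℝ), 0 < x → Icc x y ⊆ Ioi 0 := fun _ hx _ hs => hx.trans_le hs.1
  have hφ4 : MonotoneOn (fun s => φ (4 * s)) (Ioi 0) :=
    hφ.comp (fun _ _ _ _ h => by linarith) fun s (hs : 0 < s) => by simp only [mem_Ioi]; linarith
  have hupper := setLIntegral_Ioc_mul_div_le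
    (ofReal_mono.comp_monotoneOn (hφ.mono (hIcc (2 * a) ha)))
    (ofReal_mono.comp_antitoneOn (hψ.mono (hIcc (2 * a) ha)))
  have hlower := le_setLIntegral_Ioc_mul_div
    ((ENNReal.monotone_rpow_of_nonneg hθ0.le).comp_monotoneOn
      (ofReal_mono.comp_monotoneOn (hφ4.mono (hIcc a (half_pos ha)))))
    ((ENNReal.monotone_rpow_of_nonneg hθ0.le).comp_antitoneOn
      (ofReal_mono.comp_antitoneOn (hψ.mono (hIcc a (half_pos ha)))))
  rw [lintegral_Ioc_inv_ofReal ha (by linarith), mul_div_cancel_right₀ _ ha.ne'] at hupper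
  rw [lintegral_Ioc_inv_ofReal (half_pos ha) (by linarith), div_div_cancel₀ ha.ne'] at hlower
  simp only [Function.comp_apply, show 4 * (a / 2) = 2 * a by ring] at hupper hlower
  calc _ ≤ (ENNReal.ofReal (φ (2 * a)) * ENNReal.ofReal (ψ a) * ENNReal.ofReal (Real.log 2)) ^ θ :=
        ENNReal.rpow_le_rpow hupper hθ0.le
    _ = ENNReal.ofReal (Real.log 2 ^ (-(1 - θ))) * (ENNReal.ofReal (φ (2 * a)) ^ θ *
          ENNReal.ofReal (ψ a) ^ θ * ENNReal.ofReal (Real.log 2)) := by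
        rw [ENNReal.mul_rpow_of_nonneg _ _ hθ0.le, ENNReal.mul_rpow_of_nonneg _ _ hθ0.le,
          ENNReal.ofReal_rpow_eq_ofReal_rpow_neg_one_sub_mul (Real.log_pos one_lt_two)]
        ring
    _ ≤ _ := by gcongr

theorem monotone_integral_theta_general (θ t : ℝ) (hθ0 : 0 < θ) (hθ1 : θ ≤ 1) (ht : 0 < t)
    (φ ψ : ℝ → ℝ)
    (hφ : MonotoneOn φ (Set.Ioi 0)) (hψ : AntitoneOn ψ (Set.Ioi 0)) :
    (∫⁻ s in Set.Ioi t,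
        ENNReal.ofReal (φ s) * ENNReal.ofReal (ψ s) / ENNReal.ofReal s) ^ θ ≤
      ENNReal.ofReal (Real.log 2 ^ (-(1 - θ))) *
        ∫⁻ s in Set.Ioi (t / 2),
          ENNReal.ofReal (φ (4 * s)) ^ θ * ENNReal.ofReal (ψ s) ^ θ / ENNReal.ofReal s := by
  have hblock : ∀ n : ℕ,
      (∫⁻ s in Ioc (2 ^ n * t) (2 ^ (n + 1) * t),
          ENNReal.ofReal (φ s) * ENNReal.ofReal (ψ s) / ENNReal.ofReal s) ^ θ ≤
        ENNReal.ofReal (Real.log 2 ^ (-(1 - θ))) *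
          ∫⁻ s in Ioc (2 ^ n * (t / 2)) (2 ^ (n + 1) * (t / 2)),
            ENNReal.ofReal (φ (4 * s)) ^ θ * ENNReal.ofReal (ψ s) ^ θ / ENNReal.ofReal s := by
    intro n
    rw [show (2 : ℝ) ^ (n + 1) * t = 2 * (2 ^ n * t) by ring,
      show (2 : ℝ) ^ n * (t / 2) = 2 ^ n * t / 2 by ring,
      show (2 : ℝ) ^ (n + 1) * (t / 2) = 2 ^ n * t by ring]
    exact rpow_setLIntegral_Ioc_two_mul_le hθ0 hφ hψ (by positivity)
  rw [lintegral_Ioi_eq_tsum_lintegral_Ioc_two_pow_mul _ ht,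
    lintegral_Ioi_eq_tsum_lintegral_Ioc_two_pow_mul _ (half_pos ht), ← ENNReal.tsum_mul_left]
  exact (ENNReal.rpow_tsum_le_tsum_rpow _ hθ0 hθ1).trans (ENNReal.tsum_le_tsum hblock)

/-- The elementary lemma: for `θ ∈ (0,1]`, `t > 0`, `φ` increasing and `ψ` decreasing on
`(0,∞)`, `(∫_t^∞ φψ ds/s)^θ ≤ (log 2)^{-(1-θ)} ∫_{t/2}^∞ φ(4s)^θ ψ(s)^θ ds/s`. -/
theorem monotone_integral_theta (θ t : ℝ) (hθ0 : 0 < θ) (hθ1 : θ ≤ 1) (ht : 0 < t)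
    (φ ψ : ℝ → ℝ)
    (hφ0 : ∀ s, 0 < s → 0 ≤ φ s) (hψ0 : ∀ s, 0 < s → 0 ≤ ψ s)
    (hφ : MonotoneOn φ (Set.Ioi 0)) (hψ : AntitoneOn ψ (Set.Ioi 0)) :
    (∫⁻ s in Set.Ioi t,
        ENNReal.ofReal (φ s) * ENNReal.ofReal (ψ s) / ENNReal.ofReal s) ^ θ ≤
      ENNReal.ofReal (Real.log 2 ^ (-(1 - θ))) *
        ∫⁻ s in Set.Ioi (t / 2),
          ENNReal.ofReal (φ (4 * s)) ^ θ * ENNReal.ofReal (ψ s) ^ θ / ENNReal.ofReal s :=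
  monotone_integral_theta_general θ t hθ0 hθ1 ht φ ψ hφ hψ
end
end

section
/- Let 1<p<∞ and 0<δ<1, and define the weight on ℝ by w_δ(x) = δ^{p-1} for |x| ≤ 1 and w_δ(x) = |x|^{(1-δ)(p-1)} for |x| > 1. Then [w_δ]_{A_p} ≈ δ^{-(p-1)}, i.e. there are constants 0 < c_p ≤ C_p < ∞ depending only on p such that c_p δ^{-(p-1)} ≤ [w_δ]_{A_p} ≤ C_p δ^{-(p-1)}. -/
open MeasureTheory ENNReal NNReal Set

noncomputable section

/-- The Hardy–Littlewood maximal operator on `ℝ` (over bounded intervals). -/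
def maximal1 (f : ℝ → ℝ≥0∞) (x : ℝ) : ℝ≥0∞ :=
  ⨆ (a : ℝ) (b : ℝ) (_ : a < b) (_ : x ∈ Set.Icc a b),
    (∫⁻ y in Set.Icc a b, f y) / ENNReal.ofReal (b - a)

/-- The Muckenhoupt constant `[w]_{A_p}` on `ℝ`. -/
def Ap1 (p : ℝ) (w : ℝ → ℝ≥0∞) : ℝ≥0∞ :=
  ⨆ (a : ℝ) (b : ℝ) (_ : a < b),
    ((∫⁻ x in Set.Icc a b, w x) / ENNReal.ofReal (b - a)) *
      ((∫⁻ x in Set.Icc a b, w x ^ (1 - conjExp p)) / ENNReal.ofReal (b - a)) ^ (p - 1)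

/-- The Fujii–Wilson constant `[w]_{A_∞}` on `ℝ`. -/
def Ainf1 (w : ℝ → ℝ≥0∞) : ℝ≥0∞ :=
  ⨆ (a : ℝ) (b : ℝ) (_ : a < b),
    (∫⁻ x in Set.Icc a b, maximal1 ((Set.Icc a b).indicator w) x) / ∫⁻ x in Set.Icc a b, w x

/-- The weight `w_δ(x) = δ^{p-1}` for `|x| ≤ 1`, `|x|^{(1-δ)(p-1)}` for `|x| > 1`. -/
def wdelta (p δ : ℝ) (x : ℝ) : ℝ≥0∞ :=
  if |x| ≤ 1 then ENNReal.ofReal (δ ^ (p - 1)) else ENNReal.ofReal (|x| ^ ((1 - δ) * (p - 1)))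

/-!
The dual weight `σ = w_δ ^ (1 - p')` equals `δ⁻¹` on `[-1, 1]` and `|x| ^ (δ - 1)` outside.
On `[0, 2]` the averages of `w_δ` and `σ` are at least `1/2` and `1/(2δ)`, which gives the lower
bound. For the upper bound, put `G = max 1 (max |a| |b|)`: on `[a, b]` we have
`w_δ ≤ G ^ ((1-δ)(p-1))`, and `⨍ σ ≤ 4 δ⁻¹ G ^ (δ - 1)`, because either `[a, b]` is short and
stays at distance `≳ G` from the origin, or it is long and `∫_{-G}^{G} σ ≤ 2 G ^ δ / δ`.
The powers of `G` cancel.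
-/

lemma one_sub_conjExp {p : ℝ} (hp : 1 < p) : 1 - conjExp p = -(p - 1)⁻¹ := by
  have : p - 1 ≠ 0 := by linarith
  unfold conjExp
  field_simp
  ring

lemma setLIntegral_Icc_le_mul {f : ℝ → ℝ≥0∞} {a b : ℝ} {K : ℝ≥0∞}
    (hf : ∀ x ∈ Icc a b, f x ≤ K) : ∫⁻ x in Icc a b, f x ≤ K * ENNReal.ofReal (b - a) := by
  calc ∫⁻ x in Icc a b, f x ≤ ∫⁻ _ in Icc a b, K := setLIntegral_mono' measurableSet_Icc hf
    _ = K * ENNReal.ofReal (b - a) := by rw [setLIntegral_const, Real.volume_Icc]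

lemma setLIntegral_Icc_neg_zero_of_even {f : ℝ → ℝ≥0∞} (hf : ∀ x, f (-x) = f x) (M : ℝ) :
    ∫⁻ x in Icc (-M) 0, f x = ∫⁻ x in Icc 0 M, f x := by
  have h := (Measure.measurePreserving_neg (volume : Measure ℝ)).setLIntegral_comp_preimage_emb
    (MeasurableEquiv.neg ℝ).measurableEmbedding f (Icc (-M) 0)
  simp only [hf] at h
  rw [← h]
  congr 2
  ext x
  simp [and_comm]

lemma setLIntegral_Ioc_one_rpow {q B : ℝ} (hq : -1 < q) (hB : 1 ≤ B) :
    ∫⁻ x in Ioc 1 B, ENNReal.ofReal (x ^ q) = ENNReal.ofReal ((B ^ (q + 1) - 1) / (q + 1)) := by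
  have hcont : ContinuousOn (fun x : ℝ => x ^ q) (Icc 1 B) :=
    continuousOn_id.rpow_const fun x hx => Or.inl (by simp only [id]; linarith [hx.1])
  have hnonneg : 0 ≤ᵐ[volume.restrict (Ioc 1 B)] fun x : ℝ => x ^ q := by
    filter_upwards [ae_restrict_mem measurableSet_Ioc] with x hx
    exact Real.rpow_nonneg (by linarith [hx.1]) q
  rw [← ofReal_integral_eq_lintegral_ofReal
    (hcont.integrableOn_Icc.mono_set Ioc_subset_Icc_self) hnonneg,
    ← intervalIntegral.integral_of_le hB, integral_rpow (Or.inl hq), Real.one_rpow]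

section Wdelta

variable {p δ : ℝ}

def wdeltaDual (δ x : ℝ) : ℝ := if |x| ≤ 1 then δ⁻¹ else |x| ^ (δ - 1)

lemma wdelta_rpow_one_sub_conjExp (hp : 1 < p) (hδ : 0 < δ) (x : ℝ) :
    wdelta p δ x ^ (1 - conjExp p) = ENNReal.ofReal (wdeltaDual δ x) := by
  have hp1 : p - 1 ≠ 0 := by linarith
  rw [one_sub_conjExp hp]
  unfold wdelta wdeltaDual
  split_ifs with hx
  · rw [ENNReal.ofReal_rpow_of_pos (by positivity), ← Real.rpow_mul hδ.le, mul_neg,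
      mul_inv_cancel₀ hp1, Real.rpow_neg_one]
  · have hx0 : 0 < |x| := by linarith
    rw [ENNReal.ofReal_rpow_of_pos (by positivity), ← Real.rpow_mul hx0.le]
    congr 2
    field_simp
    ring

lemma wdeltaDual_neg (δ x : ℝ) : wdeltaDual δ (-x) = wdeltaDual δ x := by
  simp only [wdeltaDual, abs_neg]

lemma wdeltaDual_le (hδ0 : 0 < δ) (hδ1 : δ < 1) (x : ℝ) :
    wdeltaDual δ x ≤ δ⁻¹ * max 1 |x| ^ (δ - 1) := by
  unfold wdeltaDual
  split_ifs with hx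
  · simp [max_eq_left hx]
  · rw [max_eq_right (by linarith)]
    exact le_mul_of_one_le_left (by positivity) ((one_le_inv₀ hδ0).2 hδ1.le)

lemma wdeltaDual_le_inv (hδ0 : 0 < δ) (hδ1 : δ < 1) (x : ℝ) : wdeltaDual δ x ≤ δ⁻¹ :=
  (wdeltaDual_le hδ0 hδ1 x).trans <| mul_le_of_le_one_right (by positivity)
    (Real.rpow_le_one_of_one_le_of_nonpos (le_max_left _ _) (by linarith))

lemma setLIntegral_Icc_zero_wdeltaDual_le (hδ0 : 0 < δ) (hδ1 : δ < 1) {M : ℝ} (hM : 1 ≤ M) :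
    ∫⁻ x in Icc 0 M, ENNReal.ofReal (wdeltaDual δ x) ≤ ENNReal.ofReal (M ^ δ / δ) := by
  have hcore : ∫⁻ x in Icc 0 1, ENNReal.ofReal (wdeltaDual δ x) ≤ ENNReal.ofReal δ⁻¹ := by
    calc _ ≤ ENNReal.ofReal δ⁻¹ * ENNReal.ofReal (1 - 0) := setLIntegral_Icc_le_mul fun x _ =>
          ENNReal.ofReal_le_ofReal (wdeltaDual_le_inv hδ0 hδ1 x)
      _ = _ := by norm_num
  have htail :
      ∫⁻ x in Ioc 1 M, ENNReal.ofReal (wdeltaDual δ x) = ENNReal.ofReal ((M ^ δ - 1) / δ) := by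
    rw [← sub_add_cancel δ 1, ← setLIntegral_Ioc_one_rpow (by linarith) hM]
    refine setLIntegral_congr_fun measurableSet_Ioc fun x hx => ?_
    have hx1 : 1 < x := hx.1
    simp [wdeltaDual, abs_of_pos (by linarith : (0:ℝ) < x), hx1.not_ge]
  calc _ ≤ ∫⁻ x in Icc 0 1 ∪ Ioc 1 M, ENNReal.ofReal (wdeltaDual δ x) := by
        rw [Icc_union_Ioc_eq_Icc zero_le_one hM]
    _ ≤ ENNReal.ofReal δ⁻¹ + ENNReal.ofReal ((M ^ δ - 1) / δ) :=
        (lintegral_union_le _ _ _).trans (add_le_add hcore htail.le)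
    _ = ENNReal.ofReal (M ^ δ / δ) := by
        rw [← ENNReal.ofReal_add (by positivity)
          (div_nonneg (by linarith [Real.one_le_rpow hM hδ0.le]) hδ0.le)]
        congr 1
        field_simp
        ring

lemma setLIntegral_Icc_neg_self_wdeltaDual_le (hδ0 : 0 < δ) (hδ1 : δ < 1) {M : ℝ} (hM : 1 ≤ M) :
    ∫⁻ x in Icc (-M) M, ENNReal.ofReal (wdeltaDual δ x) ≤ ENNReal.ofReal (2 * M ^ δ / δ) := by
  have hhalf := setLIntegral_Icc_zero_wdeltaDual_le hδ0 hδ1 hM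
  calc _ = ∫⁻ x in Icc (-M) 0 ∪ Icc 0 M, ENNReal.ofReal (wdeltaDual δ x) := by
        rw [Icc_union_Icc_eq_Icc (by linarith) (by linarith)]
    _ ≤ ENNReal.ofReal (M ^ δ / δ) + ENNReal.ofReal (M ^ δ / δ) := by
        refine (lintegral_union_le _ _ _).trans (add_le_add ?_ hhalf)
        rwa [setLIntegral_Icc_neg_zero_of_even fun x => by rw [wdeltaDual_neg]]
    _ = ENNReal.ofReal (2 * M ^ δ / δ) := by
        rw [← ENNReal.ofReal_add (by positivity) (by positivity)]
        ring_nf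

lemma setLIntegral_Icc_wdeltaDual_le (hδ0 : 0 < δ) (hδ1 : δ < 1) {a b : ℝ} (hab : a ≤ b) :
    ∫⁻ x in Icc a b, ENNReal.ofReal (wdeltaDual δ x) ≤
      ENNReal.ofReal (4 / δ * max 1 (max |a| |b|) ^ (δ - 1)) * ENNReal.ofReal (b - a) := by
  set G := max 1 (max |a| |b|)
  have hG : 1 ≤ G := le_max_left _ _
  have hGpow : 0 ≤ G ^ (δ - 1) := by positivity
  rcases le_or_gt (b - a) (G / 2) with hshort | hlong
  · refine setLIntegral_Icc_le_mul fun x hx => ENNReal.ofReal_le_ofReal ?_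
    have hGx : G / 2 ≤ max 1 |x| := by
      obtain ⟨hax, hxb⟩ := hx
      have habs := neg_abs_le x
      have habs' := le_abs_self x
      have ha : |a| ≤ |x| + (b - a) := abs_le.2 ⟨by linarith, by linarith⟩
      have hb : |b| ≤ |x| + (b - a) := abs_le.2 ⟨by linarith, by linarith⟩
      have : G ≤ max 1 |x| + (b - a) := max_le (by linarith [le_max_left 1 |x|])
        (max_le (by linarith [le_max_right 1 |x|]) (by linarith [le_max_right 1 |x|]))
      linarith
    have htwo : (G / 2) ^ (δ - 1) ≤ 2 * G ^ (δ - 1) := by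
      rw [Real.div_rpow (by linarith) zero_le_two, div_le_iff₀ (by positivity)]
      have : 2⁻¹ ≤ (2 : ℝ) ^ (δ - 1) := by
        rw [← Real.rpow_neg_one]
        exact Real.rpow_le_rpow_of_exponent_le one_le_two (by linarith)
      nlinarith
    calc wdeltaDual δ x ≤ δ⁻¹ * max 1 |x| ^ (δ - 1) := wdeltaDual_le hδ0 hδ1 x
      _ ≤ δ⁻¹ * (G / 2) ^ (δ - 1) := mul_le_mul_of_nonneg_left
          (Real.rpow_le_rpow_of_nonpos (by linarith) hGx (by linarith)) (by positivity)
      _ ≤ δ⁻¹ * (2 * G ^ (δ - 1)) := by gcongr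
      _ ≤ 4 / δ * G ^ (δ - 1) := by
          rw [div_eq_mul_inv]
          nlinarith [inv_pos.2 hδ0]
  · have hsub : Icc a b ⊆ Icc (-G) G := fun x hx =>
      abs_le.1 ((abs_le_max_abs_abs hx.1 hx.2).trans (le_max_right _ _))
    calc _ ≤ ∫⁻ x in Icc (-G) G, ENNReal.ofReal (wdeltaDual δ x) := lintegral_mono_set hsub
      _ ≤ ENNReal.ofReal (2 * G ^ δ / δ) := setLIntegral_Icc_neg_self_wdeltaDual_le hδ0 hδ1 hG
      _ ≤ _ := by
          rw [← ENNReal.ofReal_mul (by positivity)]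
          refine ENNReal.ofReal_le_ofReal ?_
          have hGδ : G ^ δ = G ^ (δ - 1) * G := by
            rw [← Real.rpow_add_one (by positivity)]; ring_nf
          rw [hGδ, div_le_iff₀ hδ0]
          field_simp
          nlinarith

lemma wdelta_le (hp : 1 < p) (hδ0 : 0 < δ) (hδ1 : δ < 1) {x G : ℝ} (hG : 1 ≤ G) (hx : |x| ≤ G) :
    wdelta p δ x ≤ ENNReal.ofReal (G ^ ((1 - δ) * (p - 1))) := by
  have hq : 0 ≤ (1 - δ) * (p - 1) := mul_nonneg (by linarith) (by linarith)
  unfold wdelta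
  split_ifs
  · exact ENNReal.ofReal_le_ofReal <|
      (Real.rpow_le_one hδ0.le hδ1.le (by linarith)).trans (Real.one_le_rpow hG hq)
  · exact ENNReal.ofReal_le_ofReal (Real.rpow_le_rpow (abs_nonneg x) hx hq)

lemma one_le_wdelta (hp : 1 < p) (hδ1 : δ < 1) {x : ℝ} (hx : 1 < |x|) : 1 ≤ wdelta p δ x := by
  rw [wdelta, if_neg hx.not_ge, ← ENNReal.ofReal_one]
  exact ENNReal.ofReal_le_ofReal
    (Real.one_le_rpow hx.le (mul_nonneg (by linarith) (by linarith)))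

lemma Ap1_wdelta_le (hp : 1 < p) (hδ0 : 0 < δ) (hδ1 : δ < 1) :
    Ap1 p (wdelta p δ) ≤ ENNReal.ofReal ((4 / δ) ^ (p - 1)) := by
  refine iSup_le fun a => iSup_le fun b => iSup_le fun hab => ?_
  set G := max 1 (max |a| |b|)
  have hG : 1 ≤ G := le_max_left _ _
  have hvol : ENNReal.ofReal (b - a) ≠ 0 := by simpa using hab
  have hw : (∫⁻ x in Icc a b, wdelta p δ x) / ENNReal.ofReal (b - a) ≤
      ENNReal.ofReal (G ^ ((1 - δ) * (p - 1))) := by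
    rw [ENNReal.div_le_iff hvol ENNReal.ofReal_ne_top]
    exact setLIntegral_Icc_le_mul fun x hx => wdelta_le hp hδ0 hδ1 hG
      ((abs_le_max_abs_abs hx.1 hx.2).trans (le_max_right _ _))
  have hσ : (∫⁻ x in Icc a b, wdelta p δ x ^ (1 - conjExp p)) / ENNReal.ofReal (b - a) ≤
      ENNReal.ofReal (4 / δ * G ^ (δ - 1)) := by
    rw [ENNReal.div_le_iff hvol ENNReal.ofReal_ne_top]
    simp_rw [wdelta_rpow_one_sub_conjExp hp hδ0]
    exact setLIntegral_Icc_wdeltaDual_le hδ0 hδ1 hab.le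
  calc _ ≤ ENNReal.ofReal (G ^ ((1 - δ) * (p - 1))) *
        ENNReal.ofReal (4 / δ * G ^ (δ - 1)) ^ (p - 1) :=
        mul_le_mul' hw (ENNReal.rpow_le_rpow hσ (by linarith))
    _ = ENNReal.ofReal ((4 / δ) ^ (p - 1)) := by
        rw [ENNReal.ofReal_rpow_of_nonneg (by positivity) (by linarith),
          ← ENNReal.ofReal_mul (by positivity), Real.mul_rpow (by positivity) (by positivity),
          ← Real.rpow_mul (by linarith), mul_left_comm, ← Real.rpow_add (by linarith)]
        ring_nf
        simp

lemma le_Ap1_wdelta (hp : 1 < p) (hδ0 : 0 < δ) (hδ1 : δ < 1) :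
    ENNReal.ofReal (2 ^ (-p) * δ ^ (-(p - 1))) ≤ Ap1 p (wdelta p δ) := by
  have hw : 1 ≤ ∫⁻ x in Icc 0 2, wdelta p δ x :=
    calc 1 = ∫⁻ _ in Ioc (1 : ℝ) 2, 1 := by norm_num
      _ ≤ ∫⁻ x in Ioc (1 : ℝ) 2, wdelta p δ x := setLIntegral_mono' measurableSet_Ioc fun x hx =>
          one_le_wdelta hp hδ1 (by rw [abs_of_pos (by linarith [hx.1])]; exact hx.1)
      _ ≤ _ := lintegral_mono_set (Ioc_subset_Icc_self.trans (Icc_subset_Icc zero_le_one le_rfl))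
  have hσ : ENNReal.ofReal δ⁻¹ ≤ ∫⁻ x in Icc 0 2, wdelta p δ x ^ (1 - conjExp p) :=
    calc ENNReal.ofReal δ⁻¹ = ∫⁻ _ in Icc (0 : ℝ) 1, ENNReal.ofReal δ⁻¹ := by norm_num
      _ = ∫⁻ x in Icc (0 : ℝ) 1, wdelta p δ x ^ (1 - conjExp p) := by
          refine setLIntegral_congr_fun measurableSet_Icc fun x hx => ?_
          rw [wdelta_rpow_one_sub_conjExp hp hδ0, wdeltaDual,
            if_pos (abs_le.2 ⟨by linarith [hx.1], hx.2⟩)]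
      _ ≤ _ := lintegral_mono_set (Icc_subset_Icc le_rfl one_le_two)
  calc ENNReal.ofReal (2 ^ (-p) * δ ^ (-(p - 1)))
      = 1 / ENNReal.ofReal (2 - 0) * (ENNReal.ofReal δ⁻¹ / ENNReal.ofReal (2 - 0)) ^ (p - 1) := by
        rw [← ENNReal.ofReal_one, ← ENNReal.ofReal_div_of_pos (by norm_num),
          ← ENNReal.ofReal_div_of_pos (by norm_num),
          ENNReal.ofReal_rpow_of_nonneg (by positivity) (by linarith),
          ← ENNReal.ofReal_mul (by norm_num)]
        congr 1
        rw [sub_zero, Real.div_rpow (by positivity) zero_le_two, Real.inv_rpow hδ0.le,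
          ← Real.rpow_neg hδ0.le, show -p = -1 - (p - 1) by ring, Real.rpow_sub two_pos,
          Real.rpow_neg_one]
        ring
    _ ≤ _ := mul_le_mul' (ENNReal.div_le_div_right hw _)
        (ENNReal.rpow_le_rpow (ENNReal.div_le_div_right hσ _) (by linarith))
    _ ≤ Ap1 p (wdelta p δ) := le_iSup₂_of_le (0 : ℝ) (2 : ℝ) (le_iSup_of_le two_pos le_rfl)

end Wdelta

/-- `[w_δ]_{A_p} ≈ δ^{-(p-1)}` for the weight `w_δ`. -/
theorem wdelta_Ap_asymptotics (p : ℝ) (hp : 1 < p) :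
    ∃ c C : ℝ, 0 < c ∧ 0 < C ∧ ∀ δ : ℝ, 0 < δ → δ < 1 →
      ENNReal.ofReal (c * δ ^ (-(p - 1))) ≤ Ap1 p (wdelta p δ) ∧
        Ap1 p (wdelta p δ) ≤ ENNReal.ofReal (C * δ ^ (-(p - 1))) := by
  refine ⟨2 ^ (-p), 4 ^ (p - 1), by positivity, by positivity, fun δ hδ0 hδ1 =>
    ⟨le_Ap1_wdelta hp hδ0 hδ1, (Ap1_wdelta_le hp hδ0 hδ1).trans_eq ?_⟩⟩
  rw [Real.div_rpow (by norm_num) hδ0.le, Real.rpow_neg hδ0.le, div_eq_mul_inv]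
end
end

section
/- Let 1<p<∞ and 0<q≤p, and for 0<δ<1 define the weight on ℝ by w_δ(x) = δ^{p-1} for |x| ≤ 1 and w_δ(x) = |x|^{(1-δ)(p-1)} for |x| > 1. Then there is a constant c_{p,q}>0 depending only on p and q such that for all δ ∈ (0,1), ‖M‖_{L^{p,q}(w_δ)→L^{p,q}(w_δ)} ≥ c_{p,q} δ^{-1/q - (p-1)/p}. In particular (since [w_δ]_{A_p}^{1/p} ≈ δ^{-(p-1)/p} and [σ_δ]_{A_∞}^{1/q} ≲ δ^{-1/q} for σ_δ = w_δ^{1-p'}), the exponents 1/p on [w]_{A_p} and 1/q on [σ]_{A_∞} in the mixed bound ‖M‖_{L^{p,q}(w)} ≲ [w]_{A_p}^{1/p}[σ]_{A_∞}^{1/q} cannot be replaced by smaller ones. -/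
open MeasureTheory ENNReal NNReal Set

noncomputable section

/-- The weighted distribution function `w({|f| > s})`. -/
def wDist {α : Type*} [MeasurableSpace α] (μ : Measure α) (w : α → ℝ≥0∞)
    (f : α → ℝ≥0∞) (s : ℝ) : ℝ≥0∞ :=
  ∫⁻ x in {x | ENNReal.ofReal s < f x}, w x ∂μ

/-- The weighted Lorentz quasinorm `‖f‖_{L^{p,q}(w)}`; for `q = ∞` it is the weak norm. -/
def lorentzNorm {α : Type*} [MeasurableSpace α] (μ : Measure α) (w : α → ℝ≥0∞)
    (p : ℝ) (q : ℝ≥0∞) (f : α → ℝ≥0∞) : ℝ≥0∞ :=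
  if q = ∞ then ⨆ (s : ℝ) (_ : 0 < s), ENNReal.ofReal s * wDist μ w f s ^ (1 / p)
  else (ENNReal.ofReal p * ∫⁻ s in Set.Ioi (0 : ℝ),
      ENNReal.ofReal s ^ q.toReal * wDist μ w f s ^ (q.toReal / p) / ENNReal.ofReal s) ^ (1 / q.toReal)

/-- `min(p,q)` for a real `p` and an extended-real `q`. -/
def minE (p : ℝ) (q : ℝ≥0∞) : ℝ := if q = ∞ then p else min p q.toReal
/-! Test the bound on `f = 1_{(0,1]}`, whose norm is `(p/q)^{1/q} w_δ((0,1])^{1/p} ≈ δ^{(p-1)/p}`.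
Since `Mf(x) ≥ 1/x` for `x ≥ 1`, the level set `{Mf > s}` contains `(1, 1/s)`, whose `w_δ`-measure
is `≳ s^{-β}` with `β = (1-δ)(p-1)+1 = p - δ(p-1)`. Inserted into the Lorentz integral, this power
law gives `∫_0^{1/2} s^{ε-1} ds` with `ε = q(1 - β/p) = q(p-1)δ/p`, which is of size `1/ε ≈ 1/δ`;
hence `‖Mf‖ ≳ δ^{-1/q}`. -/

open intervalIntegral in
lemma setLIntegral_Ioo_ofReal_rpow {a b r : ℝ} (ha : 0 ≤ a) (hab : a ≤ b) (hr : -1 < r) :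
    ∫⁻ s in Ioo a b, ENNReal.ofReal (s ^ r)
      = ENNReal.ofReal ((b ^ (r + 1) - a ^ (r + 1)) / (r + 1)) := by
  rw [← ofReal_integral_eq_lintegral_ofReal]
  · rw [← integral_Ioc_eq_integral_Ioo, ← integral_of_le hab, integral_rpow (Or.inl hr)]
  · exact (intervalIntegrable_rpow' hr).1.mono_set Ioo_subset_Ioc_self
  · exact (ae_restrict_mem measurableSet_Ioo).mono fun x hx => Real.rpow_nonneg (ha.trans hx.1.le) r

section Lorentz

variable {α : Type*} [MeasurableSpace α] {μ : Measure α} {w : α → ℝ≥0∞} {p q : ℝ}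

lemma lorentzNorm_ofReal_eq (hq : 0 < q) (f : α → ℝ≥0∞) :
    lorentzNorm μ w p (ENNReal.ofReal q) f = (ENNReal.ofReal p *
      ∫⁻ s in Ioi 0, ENNReal.ofReal (s ^ (q - 1)) * wDist μ w f s ^ (q / p)) ^ (1 / q) := by
  rw [lorentzNorm, if_neg ofReal_ne_top, toReal_ofReal hq.le]
  congr 2
  refine setLIntegral_congr_fun measurableSet_Ioi fun s (hs : 0 < s) => ?_
  have hpow : s ^ q = s ^ (q - 1) * s := by rw [← Real.rpow_add_one hs.ne', sub_add_cancel]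
  rw [ofReal_rpow_of_pos hs, hpow, ofReal_mul (by positivity),
    mul_right_comm, ENNReal.mul_div_cancel_right (by simpa using hs) ofReal_ne_top]

omit [MeasurableSpace α] in
lemma setOf_ofReal_lt_indicator_one {E : Set α} {s : ℝ} :
    {x | ENNReal.ofReal s < E.indicator 1 x} = if s < 1 then E else ∅ := by
  ext x
  by_cases hx : x ∈ E <;> split_ifs with hs <;> simp [hx, hs]

lemma lorentzNorm_indicator_one (hp : 0 < p) (hq : 0 < q) (E : Set α) :
    lorentzNorm μ w p (ENNReal.ofReal q) (E.indicator 1)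
      = ENNReal.ofReal (p / q) ^ (1 / q) * (∫⁻ x in E, w x ∂μ) ^ (1 / p) := by
  set W := ∫⁻ x in E, w x ∂μ
  have hdist : ∀ s ∈ Ioi (0 : ℝ), ENNReal.ofReal (s ^ (q - 1)) *
      wDist μ w (E.indicator 1) s ^ (q / p)
        = (Iio 1).indicator (fun s => ENNReal.ofReal (s ^ (q - 1)) * W ^ (q / p)) s := by
    intro s _
    by_cases hs : s < 1
    · simp [wDist, setOf_ofReal_lt_indicator_one, hs, W]
    · simp [wDist, setOf_ofReal_lt_indicator_one, hs, ENNReal.zero_rpow_of_pos (div_pos hq hp)]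
  rw [lorentzNorm_ofReal_eq hq, setLIntegral_congr_fun measurableSet_Ioi hdist,
    lintegral_indicator measurableSet_Iio, Measure.restrict_restrict measurableSet_Iio,
    Iio_inter_Ioi, lintegral_mul_const _ (by fun_prop),
    setLIntegral_Ioo_ofReal_rpow le_rfl zero_le_one (by linarith), ← mul_assoc,
    ← ofReal_mul hp.le, ENNReal.mul_rpow_of_nonneg _ _ (by positivity), ← ENNReal.rpow_mul]
  congr 2
  · rw [sub_add_cancel, Real.one_rpow, Real.zero_rpow hq.ne', sub_zero, mul_one_div]
  · field_simp

lemma ofReal_le_lorentzNorm_of_rpow_le_wDist {A β t : ℝ} (hp : 0 < p) (hq : 0 < q) (hβ : β < p)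
    (hA : 0 ≤ A) (ht : 0 ≤ t) {f : α → ℝ≥0∞}
    (hf : ∀ s ∈ Ioo 0 t, ENNReal.ofReal (A * s ^ (-β)) ≤ wDist μ w f s) :
    ENNReal.ofReal (p * A ^ (q / p) * (t ^ (q * (1 - β / p)) / (q * (1 - β / p)))) ^ (1 / q)
      ≤ lorentzNorm μ w p (ENNReal.ofReal q) f := by
  set ε := q * (1 - β / p)
  have hε : 0 < ε := mul_pos hq (by rw [sub_pos, div_lt_one hp]; exact hβ)
  have hpt : ∀ s ∈ Ioo 0 t, ENNReal.ofReal (A ^ (q / p)) * ENNReal.ofReal (s ^ (ε - 1))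
      ≤ ENNReal.ofReal (s ^ (q - 1)) * wDist μ w f s ^ (q / p) := by
    intro s hs
    have hs0 : 0 < s := hs.1
    have hexp : s ^ (q - 1) * s ^ (-β * (q / p)) = s ^ (ε - 1) := by
      rw [← Real.rpow_add hs0]; congr 1; simp only [ε]; field_simp; ring
    calc ENNReal.ofReal (A ^ (q / p)) * ENNReal.ofReal (s ^ (ε - 1))
        = ENNReal.ofReal (s ^ (q - 1)) * ENNReal.ofReal (A * s ^ (-β)) ^ (q / p) := by
          rw [ofReal_rpow_of_nonneg (by positivity) (by positivity), ← ofReal_mul (by positivity),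
            ← ofReal_mul (by positivity), Real.mul_rpow hA (by positivity),
            ← Real.rpow_mul hs0.le, ← hexp]
          ring_nf
      _ ≤ ENNReal.ofReal (s ^ (q - 1)) * wDist μ w f s ^ (q / p) := by
          gcongr
          exact hf s hs
  rw [lorentzNorm_ofReal_eq hq, mul_assoc, ofReal_mul hp.le]
  gcongr
  calc ENNReal.ofReal (A ^ (q / p) * (t ^ ε / ε))
      = ∫⁻ s in Ioo 0 t, ENNReal.ofReal (A ^ (q / p)) * ENNReal.ofReal (s ^ (ε - 1)) := by
        rw [lintegral_const_mul _ (by fun_prop),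
          setLIntegral_Ioo_ofReal_rpow le_rfl ht (by linarith),
          sub_add_cancel, Real.zero_rpow hε.ne', sub_zero, ofReal_mul (by positivity)]
    _ ≤ ∫⁻ s in Ioo 0 t, ENNReal.ofReal (s ^ (q - 1)) * wDist μ w f s ^ (q / p) :=
        setLIntegral_mono' measurableSet_Ioo hpt
    _ ≤ _ := lintegral_mono_set Ioo_subset_Ioi_self

end Lorentz

lemma setLIntegral_div_le_maximal1 {f : ℝ → ℝ≥0∞} {a b x : ℝ} (hab : a < b) (hx : x ∈ Icc a b) :
    (∫⁻ y in Icc a b, f y) / ENNReal.ofReal (b - a) ≤ maximal1 f x :=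
  le_iSup₂_of_le a b (le_iSup₂_of_le hab hx le_rfl)

lemma inv_le_maximal1_indicator_Ioc {x : ℝ} (hx : 1 ≤ x) :
    (ENNReal.ofReal x)⁻¹ ≤ maximal1 ((Ioc 0 1).indicator 1) x := by
  have hx0 : 0 < x := zero_lt_one.trans_le hx
  have hint : ∫⁻ y in Icc 0 x, (Ioc (0 : ℝ) 1).indicator 1 y = 1 := by
    rw [lintegral_indicator_one measurableSet_Ioc, Measure.restrict_apply measurableSet_Ioc,
      inter_eq_left.mpr (Ioc_subset_Icc_self.trans (Icc_subset_Icc_right hx)), Real.volume_Ioc,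
      sub_zero, ENNReal.ofReal_one]
  simpa [hint] using setLIntegral_div_le_maximal1 (f := (Ioc 0 1).indicator 1) hx0 ⟨hx0.le, le_rfl⟩

section Wdelta

variable {p q δ : ℝ}

lemma setLIntegral_wdelta_Ioc : ∫⁻ x in Ioc 0 1, wdelta p δ x = ENNReal.ofReal (δ ^ (p - 1)) := by
  have hwdelta : ∀ x ∈ Ioc (0 : ℝ) 1, wdelta p δ x = ENNReal.ofReal (δ ^ (p - 1)) :=
    fun x hx => if_pos (abs_le.mpr ⟨by linarith [hx.1], hx.2⟩)
  rw [setLIntegral_congr_fun measurableSet_Ioc hwdelta,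
    setLIntegral_const, Real.volume_Ioc, sub_zero, ENNReal.ofReal_one, mul_one]

lemma setLIntegral_wdelta_Ioo {R : ℝ} (hγ : -1 < (1 - δ) * (p - 1)) (hR : 1 ≤ R) :
    ∫⁻ x in Ioo 1 R, wdelta p δ x
      = ENNReal.ofReal ((R ^ ((1 - δ) * (p - 1) + 1) - 1) / ((1 - δ) * (p - 1) + 1)) := by
  have hwdelta : ∀ x ∈ Ioo 1 R, wdelta p δ x = ENNReal.ofReal (x ^ ((1 - δ) * (p - 1))) := by
    intro x hx
    have hx0 : 0 < x := zero_lt_one.trans hx.1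
    rw [wdelta, if_neg (by rw [abs_of_pos hx0]; exact not_le.mpr hx.1), abs_of_pos hx0]
  rw [setLIntegral_congr_fun measurableSet_Ioo hwdelta,
    setLIntegral_Ioo_ofReal_rpow zero_le_one hR hγ, Real.one_rpow]

lemma ofReal_rpow_le_wDist_wdelta_maximal1 (hp : 1 < p) (hδ0 : 0 ≤ δ) (hδ1 : δ ≤ 1) {s : ℝ}
    (hs : s ∈ Ioo 0 (1 / 2)) :
    ENNReal.ofReal ((2 * p)⁻¹ * s ^ (-((1 - δ) * (p - 1) + 1)))
      ≤ wDist volume (wdelta p δ) (maximal1 ((Ioc 0 1).indicator 1)) s := by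
  set β := (1 - δ) * (p - 1) + 1
  obtain ⟨hs0, hs2⟩ := hs
  have hγ : 0 ≤ (1 - δ) * (p - 1) := mul_nonneg (by linarith) (by linarith)
  have hβp : β ≤ p := by nlinarith
  have h2s : 2 ≤ s⁻¹ := by rw [le_inv_comm₀ two_pos hs0]; linarith
  have hsub : Ioo 1 s⁻¹ ⊆ {x | ENNReal.ofReal s < maximal1 ((Ioc 0 1).indicator 1) x} := by
    intro x hx
    have hx0 : 0 < x := zero_lt_one.trans hx.1
    calc ENNReal.ofReal s < ENNReal.ofReal x⁻¹ :=
          (ofReal_lt_ofReal_iff (by positivity)).mpr ((lt_inv_comm₀ hx0 hs0).mp hx.2)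
      _ = (ENNReal.ofReal x)⁻¹ := ofReal_inv_of_pos hx0
      _ ≤ _ := inv_le_maximal1_indicator_Ioc hx.1.le
  have hpow : s⁻¹ ^ β = s ^ (-β) := by rw [Real.inv_rpow hs0.le, Real.rpow_neg hs0.le]
  have h2pow : 2 ≤ s ^ (-β) := by
    rw [← hpow]
    exact h2s.trans (Real.self_le_rpow_of_one_le (by linarith) (by linarith))
  have hreal : (2 * p)⁻¹ * s ^ (-β) ≤ (s⁻¹ ^ β - 1) / β := by
    rw [hpow, ← div_eq_inv_mul, ← div_div]
    exact div_le_div₀ (by linarith) (by linarith) (by linarith) hβp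
  calc ENNReal.ofReal ((2 * p)⁻¹ * s ^ (-β)) ≤ ENNReal.ofReal ((s⁻¹ ^ β - 1) / β) :=
        ofReal_le_ofReal hreal
    _ = ∫⁻ x in Ioo 1 s⁻¹, wdelta p δ x :=
        (setLIntegral_wdelta_Ioo (by linarith) (by linarith)).symm
    _ ≤ _ := lintegral_mono_set hsub

lemma lorentzNorm_wdelta_indicator_Ioc (hp : 1 < p) (hq : 0 < q) (hδ : 0 < δ) :
    lorentzNorm volume (wdelta p δ) p (ENNReal.ofReal q) ((Ioc 0 1).indicator 1)
      = ENNReal.ofReal ((p / q) ^ (1 / q) * δ ^ ((p - 1) / p)) := by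
  have hp0 : 0 < p := by linarith
  rw [lorentzNorm_indicator_one hp0 hq, setLIntegral_wdelta_Ioc,
    ofReal_rpow_of_nonneg (by positivity) (by positivity),
    ofReal_rpow_of_nonneg (by positivity) (by positivity), ← ofReal_mul (by positivity),
    ← Real.rpow_mul hδ.le, mul_one_div]

lemma ofReal_le_lorentzNorm_wdelta_maximal1 (hp : 1 < p) (hq : 0 < q) (hδ0 : 0 < δ)
    (hδ1 : δ < 1) :
    ENNReal.ofReal ((p * (2 * p)⁻¹ ^ (q / p) * ((1 / 2) ^ q * (p / (q * (p - 1))))) ^ (1 / q) *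
        δ ^ (-(1 / q)))
      ≤ lorentzNorm volume (wdelta p δ) p (ENNReal.ofReal q)
          (maximal1 ((Ioc 0 1).indicator 1)) := by
  have hp0 : 0 < p := by linarith
  have hp1 : 0 < p - 1 := by linarith
  set K := p * (2 * p)⁻¹ ^ (q / p) * ((1 / 2) ^ q * (p / (q * (p - 1))))
  set ε := q * (p - 1) * δ / p
  have hε : 0 < ε := by positivity
  have hεq : ε ≤ q := by
    rw [div_le_iff₀ hp0]; nlinarith [mul_pos hq hp1, mul_pos hq hp0]
  have hexp : q * (1 - ((1 - δ) * (p - 1) + 1) / p) = ε := by simp only [ε]; field_simp; ring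
  have hbound := ofReal_le_lorentzNorm_of_rpow_le_wDist (μ := volume) (w := wdelta p δ) hp0 hq
    (β := (1 - δ) * (p - 1) + 1) (by nlinarith) (inv_nonneg.mpr (by positivity))
    (by norm_num : (0 : ℝ) ≤ 1 / 2)
    (fun s hs => ofReal_rpow_le_wDist_wdelta_maximal1 hp hδ0.le hδ1.le hs)
  rw [hexp, ofReal_rpow_of_nonneg (by positivity) (by positivity)] at hbound
  refine le_trans (ofReal_le_ofReal ?_) hbound
  have hK : K * δ⁻¹ = p * (2 * p)⁻¹ ^ (q / p) * ((1 / 2) ^ q / ε) := by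
    simp only [K, ε]; field_simp
  rw [Real.rpow_neg hδ0.le, ← Real.inv_rpow hδ0.le, ← Real.mul_rpow (by positivity) (by positivity), hK]
  gcongr (_ * (?_ / _)) ^ _
  exact Real.rpow_le_rpow_of_exponent_ge (by norm_num) (by norm_num) hεq

end Wdelta

theorem wdelta_operator_norm_lower_general (p q : ℝ) (hp : 1 < p) (hq0 : 0 < q) :
    ∃ c : ℝ, 0 < c ∧ ∀ δ : ℝ, 0 < δ → δ < 1 →
      ∀ C : ℝ≥0∞,
        (∀ f : ℝ → ℝ≥0∞, Measurable f →
          lorentzNorm volume (wdelta p δ) p (ENNReal.ofReal q) (maximal1 f) ≤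
            C * lorentzNorm volume (wdelta p δ) p (ENNReal.ofReal q) f) →
        ENNReal.ofReal (c * δ ^ (-(1 / q) - (p - 1) / p)) ≤ C := by
  have hp0 : 0 < p := by linarith
  have hp1 : 0 < p - 1 := by linarith
  set K := p * (2 * p)⁻¹ ^ (q / p) * ((1 / 2) ^ q * (p / (q * (p - 1))))
  have hNpos : 0 < (p / q) ^ (1 / q) := by positivity
  refine ⟨K ^ (1 / q) / (p / q) ^ (1 / q), by positivity, fun δ hδ0 hδ1 C hC => ?_⟩
  set f : ℝ → ℝ≥0∞ := (Ioc 0 1).indicator 1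
  have hf := lorentzNorm_wdelta_indicator_Ioc hp hq0 hδ0
  have hf0 : lorentzNorm volume (wdelta p δ) p (ENNReal.ofReal q) f ≠ 0 := by
    rw [hf]; simp only [ne_eq, ofReal_eq_zero, not_le]; positivity
  have hconst : K ^ (1 / q) / (p / q) ^ (1 / q) * δ ^ (-(1 / q) - (p - 1) / p) *
      ((p / q) ^ (1 / q) * δ ^ ((p - 1) / p)) = K ^ (1 / q) * δ ^ (-(1 / q)) := by
    rw [mul_mul_mul_comm, div_mul_cancel₀ _ hNpos.ne', ← Real.rpow_add hδ0, sub_add_cancel]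
  refine (ENNReal.mul_le_mul_iff_left hf0 (hf ▸ ofReal_ne_top)).mp ?_
  calc ENNReal.ofReal (K ^ (1 / q) / (p / q) ^ (1 / q) * δ ^ (-(1 / q) - (p - 1) / p)) *
        lorentzNorm volume (wdelta p δ) p (ENNReal.ofReal q) f
      = ENNReal.ofReal (K ^ (1 / q) * δ ^ (-(1 / q))) := by
        rw [hf, ← ofReal_mul (by positivity), hconst]
    _ ≤ lorentzNorm volume (wdelta p δ) p (ENNReal.ofReal q) (maximal1 f) :=
        ofReal_le_lorentzNorm_wdelta_maximal1 hp hq0 hδ0 hδ1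
    _ ≤ C * lorentzNorm volume (wdelta p δ) p (ENNReal.ofReal q) f :=
        hC f (measurable_const.indicator measurableSet_Ioc)

/-- Sharpness in the case `q ≤ p`: the operator norm of `M` on `L^{p,q}(w_δ)` is at least
`c_{p,q} δ^{-1/q-(p-1)/p}`. -/
theorem wdelta_operator_norm_lower (p q : ℝ) (hp : 1 < p) (hq0 : 0 < q) (hqp : q ≤ p) :
    ∃ c : ℝ, 0 < c ∧ ∀ δ : ℝ, 0 < δ → δ < 1 →
      ∀ C : ℝ≥0∞,
        (∀ f : ℝ → ℝ≥0∞, Measurable f →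
          lorentzNorm volume (wdelta p δ) p (ENNReal.ofReal q) (maximal1 f) ≤
            C * lorentzNorm volume (wdelta p δ) p (ENNReal.ofReal q) f) →
        ENNReal.ofReal (c * δ ^ (-(1 / q) - (p - 1) / p)) ≤ C :=
  wdelta_operator_norm_lower_general p q hp hq0
end
end
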